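/- Let μ > 0 be a non-integer real number and let p ∈ V_μ. Then W1(p, p*) ≤ 2 max{ ∑_{n ≤ ⌊μ⌋} (⌊μ⌋+1−n) p_n − (⌊μ⌋+1−μ) , ∑_{n ≤ ⌊μ⌋} (⌊μ⌋−n) p_n }, where p* is the shifted Bernoulli distribution with mean μ. -/

import Mathlib

/-! The bound holds with equality. Write `k = ⌊μ⌋`, `F` for the CDF of `p`, and `A`, `B` for
the two arguments of the maximum. The CDF of `p*` is `0` below `k`, `1 - μ + k` at `k` and `1`
above `k`, so `W1(p, p*) = ∑_{n<k} F n + |F k - (1 - μ + k)| + ∑_{n>k} (1 - F n)`. The tail-sum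
formula `∑_n (1 - F n) = μ` makes the last sum finite, and summation by parts
`∑_{n<N} F n = ∑_{m<N} (N - m) p m` rewrites everything as `A + B + |A - B| = 2 max A B`. -/

/-- Cumulative distribution function of a pmf on ℕ: `F n = ∑_{m ≤ n} p m`. -/
noncomputable def cdf (p : ℕ → ℝ) (n : ℕ) : ℝ := ∑ m ∈ Finset.range (n + 1), p m

/-- Wasserstein-1 distance between two pmfs on ℕ, `W1(p,q) = ∑_{n ≥ 0} |F_n - H_n|`. -/
noncomputable def W1 (p q : ℕ → ℝ) : ℝ := ∑' n : ℕ, |cdf p n - cdf q n|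

/-- Gini index of a pmf on ℕ with mean μ: `G[p] = (1/(2μ)) ∑_i ∑_j |i-j| p_i p_j`. -/
noncomputable def Gini (μ : ℝ) (p : ℕ → ℝ) : ℝ :=
  (1 / (2 * μ)) * ∑' i : ℕ, ∑' j : ℕ, |(i : ℝ) - (j : ℝ)| * p i * p j

/-- The shifted Bernoulli distribution with mean μ:
`p*_{⌊μ⌋} = 1 - μ + ⌊μ⌋`, `p*_{⌊μ⌋+1} = μ - ⌊μ⌋`, `p*_n = 0` otherwise. -/
noncomputable def pstar (μ : ℝ) : ℕ → ℝ := fun n =>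
  if n = ⌊μ⌋₊ then 1 - μ + (⌊μ⌋₊ : ℝ)
  else if n = ⌊μ⌋₊ + 1 then μ - (⌊μ⌋₊ : ℝ)
  else 0

/-- The Dirac distribution on ℕ concentrated at `k`. -/
noncomputable def dirac (k : ℕ) : ℕ → ℝ := fun n => if n = k then 1 else 0

lemma sum_range_cdf (p : ℕ → ℝ) (N : ℕ) :
    ∑ n ∈ Finset.range N, cdf p n = ∑ m ∈ Finset.range N, ((N : ℝ) - m) * p m := by
  induction N with
  | zero => simp
  | succ N ih =>
    calc ∑ n ∈ Finset.range (N + 1), cdf p n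
        = ∑ m ∈ Finset.range (N + 1), (((N : ℝ) - m) * p m + p m) := by
          rw [Finset.sum_range_succ, ih, Finset.sum_add_distrib,
            Finset.sum_range_succ (fun m => ((N : ℝ) - m) * p m), cdf]
          simp
      _ = ∑ m ∈ Finset.range (N + 1), (((N + 1 : ℕ) : ℝ) - m) * p m :=
          Finset.sum_congr rfl fun m _ => by push_cast; ring

lemma hasSum_tail_of_hasSum_one {p : ℕ → ℝ} (hsum : HasSum p 1) (n : ℕ) :
    HasSum (fun m => if n < m then p m else 0) (1 - cdf p n) := by
  have hhead : HasSum (fun m => if m < n + 1 then p m else 0) (cdf p n) := by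
    have : HasSum (fun m => if m < n + 1 then p m else 0)
        (∑ m ∈ Finset.range (n + 1), if m < n + 1 then p m else 0) :=
      hasSum_sum_of_ne_finset_zero fun m hm => by simp_all
    rwa [Finset.sum_ite_of_true fun m hm => Finset.mem_range.1 hm] at this
  refine (hsum.sub hhead).congr_fun fun m => ?_
  by_cases h : n < m
  · simp [h, show ¬ m < n + 1 by omega]
  · simp [h, show m < n + 1 by omega]

/- Fubini for the nonnegative array `p m * [n < m]`: its rows sum to `m * p m`, its columns
to `1 - cdf p n`. -/
lemma hasSum_one_sub_cdf {p : ℕ → ℝ} {μ : ℝ} (hpos : ∀ n, 0 ≤ p n)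
    (hsum : HasSum p 1) (hmean : HasSum (fun n : ℕ => (n : ℝ) * p n) μ) :
    HasSum (fun n => 1 - cdf p n) μ := by
  set F : ℕ × ℕ → ℝ := fun q => if q.2 < q.1 then p q.1 else 0
  have hrow : ∀ m, HasSum (fun n => F (m, n)) ((m : ℝ) * p m) := by
    intro m
    have : HasSum (fun n => F (m, n)) (∑ n ∈ Finset.range m, F (m, n)) :=
      hasSum_sum_of_ne_finset_zero fun n hn => by simp_all [F]
    simpa [F, Finset.sum_ite_of_true fun n hn => Finset.mem_range.1 hn] using this
  have hF : HasSum F μ := by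
    have hFsummable : Summable F := by
      refine (summable_prod_of_nonneg fun q => ?_).2
        ⟨fun m => (hrow m).summable, hmean.summable.congr fun m => (hrow m).tsum_eq.symm⟩
      by_cases h : q.2 < q.1 <;> simp [F, h, hpos]
    exact (hFsummable.hasSum.prod_fiberwise hrow).unique hmean ▸ hFsummable.hasSum
  have hFswap : HasSum (F ∘ Prod.swap) μ := (Equiv.prodComm ℕ ℕ).hasSum_iff.2 hF
  exact hFswap.prod_fiberwise (hasSum_tail_of_hasSum_one hsum)

lemma cdf_pstar (μ : ℝ) (n : ℕ) :
    cdf (pstar μ) n = if n < ⌊μ⌋₊ then 0 else if n = ⌊μ⌋₊ then 1 - μ + ⌊μ⌋₊ else 1 := by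
  have hsplit : ∀ m, pstar μ m = (if ⌊μ⌋₊ = m then 1 - μ + (⌊μ⌋₊ : ℝ) else 0) +
      (if ⌊μ⌋₊ + 1 = m then μ - (⌊μ⌋₊ : ℝ) else 0) := by
    intro m
    unfold pstar
    split_ifs <;> first | omega | simp
  simp only [cdf, hsplit, Finset.sum_add_distrib, Finset.sum_ite_eq, Finset.mem_range]
  split_ifs <;> first | omega | ring

lemma hasSum_abs_cdf_sub_cdf_of_eq_one {p q : ℕ → ℝ} {μ : ℝ} {k : ℕ} (hp : ∀ n, cdf p n ≤ 1)
    (hq : ∀ n, k < n → cdf q n = 1) (htail : HasSum (fun n => 1 - cdf p n) μ) :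
    HasSum (fun n => |cdf p n - cdf q n|)
      (μ + ∑ n ∈ Finset.range (k + 1), (|cdf p n - cdf q n| - (1 - cdf p n))) := by
  have hhead : HasSum (fun n => |cdf p n - cdf q n| - (1 - cdf p n))
      (∑ n ∈ Finset.range (k + 1), (|cdf p n - cdf q n| - (1 - cdf p n))) := by
    refine hasSum_sum_of_ne_finset_zero fun n hn => ?_
    rw [hq n (by simpa using hn), abs_of_nonpos (by linarith [hp n])]
    ring
  exact (htail.add hhead).congr_fun fun n => by ring

lemma W1_pstar_eq (μ : ℝ) (p : ℕ → ℝ) (hpos : ∀ n, 0 ≤ p n) (hsum : HasSum p 1)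
    (hmean : HasSum (fun n : ℕ => (n : ℝ) * p n) μ) :
    W1 p (pstar μ) =
      2 * max
        ((∑ n ∈ Finset.range (⌊μ⌋₊ + 1), ((⌊μ⌋₊ : ℝ) + 1 - (n : ℝ)) * p n) -
          ((⌊μ⌋₊ : ℝ) + 1 - μ))
        (∑ n ∈ Finset.range (⌊μ⌋₊ + 1), ((⌊μ⌋₊ : ℝ) - (n : ℝ)) * p n) := by
  set k := ⌊μ⌋₊ with hk
  set A := (∑ n ∈ Finset.range (k + 1), ((k : ℝ) + 1 - n) * p n) - (k + 1 - μ)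
  set B := ∑ n ∈ Finset.range (k + 1), ((k : ℝ) - n) * p n
  have hB : ∑ n ∈ Finset.range k, cdf p n = B := by
    simp [sum_range_cdf, B, Finset.sum_range_succ]
  have hcdf : cdf p k = A + k + 1 - μ - B := by
    have := sum_range_cdf p (k + 1)
    rw [Finset.sum_range_succ, hB] at this
    push_cast at this
    linarith
  have hW := hasSum_abs_cdf_sub_cdf_of_eq_one (q := pstar μ) (k := k)
    (fun n => sum_le_hasSum _ (fun m _ => hpos m) hsum)
    (fun n hn => by rw [cdf_pstar, if_neg (by omega), if_neg (by omega)])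
    (hasSum_one_sub_cdf hpos hsum hmean)
  have hbelow : ∀ n ∈ Finset.range k,
      |cdf p n - cdf (pstar μ) n| - (1 - cdf p n) = 2 * cdf p n - 1 := by
    intro n hn
    rw [cdf_pstar, ← hk, if_pos (Finset.mem_range.1 hn), sub_zero,
      abs_of_nonneg (show 0 ≤ cdf p n from Finset.sum_nonneg fun m _ => hpos m)]
    ring
  have hmax : 2 * max A B = A + B + |A - B| := by
    rw [two_mul, ← two_nsmul, two_nsmul_sup_eq_add_add_abs_sub, abs_sub_comm]
  rw [W1, hW.tsum_eq, Finset.sum_range_succ, Finset.sum_congr rfl hbelow, cdf_pstar, ← hk,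
    if_neg (lt_irrefl k), if_pos rfl, Finset.sum_sub_distrib, ← Finset.mul_sum, hB, hcdf,
    Finset.sum_const, Finset.card_range, nsmul_one, hmax]
  ring_nf

theorem stmt_14_general (μ : ℝ) (p : ℕ → ℝ)
    (hpos : ∀ n, 0 ≤ p n) (hsum : HasSum p 1)
    (hmean : HasSum (fun n : ℕ => (n : ℝ) * p n) μ) :
    W1 p (pstar μ) ≤
      2 * max
        ((∑ n ∈ Finset.range (⌊μ⌋₊ + 1), ((⌊μ⌋₊ : ℝ) + 1 - (n : ℝ)) * p n) -
          ((⌊μ⌋₊ : ℝ) + 1 - μ))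
        (∑ n ∈ Finset.range (⌊μ⌋₊ + 1), ((⌊μ⌋₊ : ℝ) - (n : ℝ)) * p n) :=
  (W1_pstar_eq μ p hpos hsum hmean).le

theorem stmt_14 (μ : ℝ) (hμ : 0 < μ) (hni : ∀ n : ℕ, μ ≠ (n : ℝ)) (p : ℕ → ℝ)
    (hpos : ∀ n, 0 ≤ p n) (hsum : HasSum p 1)
    (hmean : HasSum (fun n : ℕ => (n : ℝ) * p n) μ) :
    W1 p (pstar μ) ≤
      2 * max
        ((∑ n ∈ Finset.range (⌊μ⌋₊ + 1), ((⌊μ⌋₊ : ℝ) + 1 - (n : ℝ)) * p n) -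
          ((⌊μ⌋₊ : ℝ) + 1 - μ))
        (∑ n ∈ Finset.range (⌊μ⌋₊ + 1), ((⌊μ⌋₊ : ℝ) - (n : ℝ)) * p n) :=
  stmt_14_general μ p hpos hsum hmean
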